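/- arXiv:cs/0205046 — 2 statements merged into one kernel-verified Lean document; each statement's English description precedes it below -/
import Mathlib

section
/- For any m×n matrix A, the value V(A) = min over probability column-strategies x of max over rows of A_i · x equals max over probability row-strategies y of min over columns j of (A^T)_j · y (von Neumann minimax for matrix games). -/
open scoped BigOperators

noncomputable def gameValue (m n : ℕ) (A : Matrix (Fin m) (Fin n) ℝ) : ℝ :=
  ⨅ x : stdSimplex ℝ (Fin n), ⨆ i : Fin m, ∑ j, A i j * (x : Fin n → ℝ) j

/-! The payoff `y ⬝ᵥ A *ᵥ x` is bilinear, hence continuous and both convex and concave in each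
variable, and the simplices are compact and convex, so Sion's minimax theorem yields a saddle
point `(a, b)`. Against a fixed mixed strategy some pure strategy is a best response, so the
min-max over pure rows and the max-min over pure columns both equal the saddle value
`b ⬝ᵥ A *ᵥ a`. -/

open Matrix

variable {ι κ : Type*} [Fintype ι] [Fintype κ]

theorem dotProduct_le_ciSup_of_mem_stdSimplex {y : ι → ℝ} (hy : y ∈ stdSimplex ℝ ι)
    (v : ι → ℝ) : y ⬝ᵥ v ≤ ⨆ i, v i :=
  calc y ⬝ᵥ v ≤ ∑ i, y i * ⨆ i, v i := Finset.sum_le_sum fun i _ ↦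
        mul_le_mul_of_nonneg_left (le_ciSup (Set.finite_range v).bddAbove i) (hy.1 i)
    _ = ⨆ i, v i := by rw [← Finset.sum_mul, hy.2, one_mul]

theorem ciInf_le_dotProduct_of_mem_stdSimplex {y : ι → ℝ} (hy : y ∈ stdSimplex ℝ ι)
    (v : ι → ℝ) : ⨅ i, v i ≤ y ⬝ᵥ v :=
  calc ⨅ i, v i = ∑ i, y i * ⨅ i, v i := by rw [← Finset.sum_mul, hy.2, one_mul]
    _ ≤ y ⬝ᵥ v := Finset.sum_le_sum fun i _ ↦
        mul_le_mul_of_nonneg_left (ciInf_le (Set.finite_range v).bddBelow i) (hy.1 i)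

theorem stdSimplex_nonempty (𝕜 : Type*) [Semiring 𝕜] [PartialOrder 𝕜] [ZeroLEOneClass 𝕜]
    [Nonempty ι] : (stdSimplex 𝕜 ι).Nonempty := by
  classical
  exact ⟨_, single_mem_stdSimplex 𝕜 (Classical.arbitrary ι)⟩

theorem Matrix.exists_isSaddlePointOn_stdSimplex [Nonempty ι] [Nonempty κ] (A : Matrix ι κ ℝ) :
    ∃ x ∈ stdSimplex ℝ κ, ∃ y ∈ stdSimplex ℝ ι,
      IsSaddlePointOn (stdSimplex ℝ κ) (stdSimplex ℝ ι) (fun x y ↦ y ⬝ᵥ A *ᵥ x) x y := by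
  classical
  let B : (ι → ℝ) →ₗ[ℝ] (κ → ℝ) →ₗ[ℝ] ℝ := toLinearMap₂' ℝ A
  have payoff_eq : (fun x y ↦ y ⬝ᵥ A *ᵥ x) = fun x y ↦ B y x := by
    ext x y; exact (toLinearMap₂'_apply' A y x).symm
  rw [payoff_eq]
  exact Sion.exists_isSaddlePointOn (stdSimplex_nonempty ℝ) (convex_stdSimplex ℝ κ)
    (isCompact_stdSimplex ℝ κ)
    (fun y _ ↦ (B y).continuous_of_finiteDimensional.lowerSemicontinuous.lowerSemicontinuousOn _)
    (fun y _ ↦ ((B y).convexOn (convex_stdSimplex ℝ κ)).quasiconvexOn)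
    (convex_stdSimplex ℝ ι) (stdSimplex_nonempty ℝ) (isCompact_stdSimplex ℝ ι)
    (fun x _ ↦
      (B.flip x).continuous_of_finiteDimensional.upperSemicontinuous.upperSemicontinuousOn _)
    (fun x _ ↦ ((B.flip x).concaveOn (convex_stdSimplex ℝ ι)).quasiconcaveOn)

section SaddlePoint

variable {A : Matrix ι κ ℝ} {a : κ → ℝ} {b : ι → ℝ}
  (ha : a ∈ stdSimplex ℝ κ) (hb : b ∈ stdSimplex ℝ ι)
  (hab : IsSaddlePointOn (stdSimplex ℝ κ) (stdSimplex ℝ ι) (fun x y ↦ y ⬝ᵥ A *ᵥ x) a b)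
include ha hb hab

theorem ciInf_ciSup_mulVec_eq_of_isSaddlePointOn [Nonempty ι] :
    ⨅ x : stdSimplex ℝ κ, ⨆ i, (A *ᵥ x) i = b ⬝ᵥ A *ᵥ a := by
  classical
  have : Nonempty (stdSimplex ℝ κ) := ⟨⟨a, ha⟩⟩
  have le_ciSup : ∀ x ∈ stdSimplex ℝ κ, b ⬝ᵥ A *ᵥ a ≤ ⨆ i, (A *ᵥ x) i := fun x hx ↦
    (hab x hx b hb).trans (dotProduct_le_ciSup_of_mem_stdSimplex hb _)
  have ciSup_le : ⨆ i, (A *ᵥ a) i ≤ b ⬝ᵥ A *ᵥ a := ciSup_le fun i ↦ by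
    simpa using hab a ha _ (single_mem_stdSimplex ℝ i)
  have bdd : BddBelow (Set.range fun x : stdSimplex ℝ κ ↦ ⨆ i, (A *ᵥ x) i) :=
    ⟨_, Set.forall_mem_range.2 fun x ↦ le_ciSup x x.2⟩
  exact ((ciInf_le bdd ⟨a, ha⟩).trans ciSup_le).antisymm (le_ciInf fun x ↦ le_ciSup x x.2)

theorem ciSup_ciInf_vecMul_eq_of_isSaddlePointOn [Nonempty κ] :
    ⨆ y : stdSimplex ℝ ι, ⨅ j, (y ᵥ* A) j = b ⬝ᵥ A *ᵥ a := by
  classical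
  have : Nonempty (stdSimplex ℝ ι) := ⟨⟨b, hb⟩⟩
  have ciInf_le : ∀ y ∈ stdSimplex ℝ ι, ⨅ j, (y ᵥ* A) j ≤ b ⬝ᵥ A *ᵥ a := fun y hy ↦ by
    refine (ciInf_le_dotProduct_of_mem_stdSimplex ha _).trans ?_
    rw [dotProduct_comm, ← dotProduct_mulVec]
    exact hab a ha y hy
  have le_ciInf : b ⬝ᵥ A *ᵥ a ≤ ⨅ j, (b ᵥ* A) j := le_ciInf fun j ↦ by
    simpa only [dotProduct_mulVec, dotProduct_single, mul_one] using
      hab _ (single_mem_stdSimplex ℝ j) b hb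
  have bdd : BddAbove (Set.range fun y : stdSimplex ℝ ι ↦ ⨅ j, (y ᵥ* A) j) :=
    ⟨_, Set.forall_mem_range.2 fun y ↦ ciInf_le y y.2⟩
  exact le_antisymm (ciSup_le fun y ↦ ciInf_le y y.2) (le_ciInf.trans (le_ciSup bdd ⟨b, hb⟩))

end SaddlePoint

/-- von Neumann's minimax theorem for finite matrix games. -/
theorem stmt1 (m n : ℕ) (hm : 0 < m) (hn : 0 < n)
    (A : Matrix (Fin m) (Fin n) ℝ) :
    gameValue m n A =
      ⨆ y : stdSimplex ℝ (Fin m), ⨅ j : Fin n, ∑ i, (y : Fin m → ℝ) i * A i j := by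
  have := Fin.pos_iff_nonempty.mp hm
  have := Fin.pos_iff_nonempty.mp hn
  obtain ⟨a, ha, b, hb, hab⟩ := A.exists_isSaddlePointOn_stdSimplex
  exact (ciInf_ciSup_mulVec_eq_of_isSaddlePointOn ha hb hab).trans
    (ciSup_ciInf_vecMul_eq_of_isSaddlePointOn ha hb hab).symm
end

section
/- Suppose a deterministic algorithm solves the fractional packing problem x ∈ P, Ax ≤ b only via queries of the form 'given vector c, return a vertex of P minimizing c·x', making at most s queries, where P is the n-simplex. If every m×s submatrix B of A (s ≤ n columns) satisfies V(B) > (1+ε)V(A) and b is the all-V(A) vector, then the algorithm cannot output a point x in the convex hull of the returned vertices satisfying Ax ≤ (1+ε)b. -/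
open scoped BigOperators

/-!
Any point of the simplex supported on at most `s ≤ n` coordinates is, after relabelling, a
point of the simplex of some `m × s` column submatrix `B` of `A` with the same payoff vector
`Ax`. Hence `max_i (Ax)_i ≥ V(B) > (1 + ε) V(A)`, so `Ax ≤ (1 + ε) V(A) 𝟙` fails.
-/

lemma iInf_le_sum_mul_of_mem_stdSimplex {ι : Type*} [Fintype ι] (v : ι → ℝ) {x : ι → ℝ}
    (hx : x ∈ stdSimplex ℝ ι) : ⨅ k, v k ≤ ∑ j, v j * x j :=
  calc ⨅ k, v k = ∑ j, (⨅ k, v k) * x j := by rw [← Finset.mul_sum, hx.2, mul_one]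
    _ ≤ ∑ j, v j * x j := Finset.sum_le_sum fun j _ =>
      mul_le_mul_of_nonneg_right (ciInf_le (Finite.bddBelow_range v) j) (hx.1 j)

lemma gameValue_le_iSup_of_mem_stdSimplex {m n : ℕ} [Nonempty (Fin m)]
    (A : Matrix (Fin m) (Fin n) ℝ) {x : Fin n → ℝ} (hx : x ∈ stdSimplex ℝ (Fin n)) :
    gameValue m n A ≤ ⨆ i, ∑ j, A i j * x j := by
  obtain ⟨i₀⟩ := ‹Nonempty (Fin m)›
  have hbdd : BddBelow (Set.range fun z : stdSimplex ℝ (Fin n) =>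
      ⨆ i, ∑ j, A i j * (z : Fin n → ℝ) j) := by
    refine ⟨⨅ k, A i₀ k, ?_⟩
    rintro _ ⟨z, rfl⟩
    exact (iInf_le_sum_mul_of_mem_stdSimplex (A i₀) z.2).trans
      (le_ciSup (Finite.bddAbove_range fun i => ∑ j, A i j * (z : Fin n → ℝ) j) i₀)
  exact ciInf_le hbdd (⟨x, hx⟩ : stdSimplex ℝ (Fin n))

lemma exists_embedding_fin_range_superset {n s : ℕ} {S : Finset (Fin n)} (hS : S.card ≤ s)
    (hsn : s ≤ n) : ∃ f : Fin s ↪ Fin n, ↑S ⊆ Set.range f := by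
  obtain ⟨T, hST, hT⟩ := Finset.exists_superset_card_eq hS (by simpa using hsn)
  exact ⟨(T.orderEmbOfFin hT).toEmbedding, by simpa using hST⟩

section Restriction

variable {n s : ℕ} {f : Fin s → Fin n} {x : Fin n → ℝ}

lemma sum_comp_mul_comp_eq_sum (hf : f.Injective) (hx : ∀ j ∉ Set.range f, x j = 0)
    (v : Fin n → ℝ) : ∑ k, v (f k) * x (f k) = ∑ j, v j * x j :=
  Fintype.sum_of_injective f hf _ _ (fun j hj => by rw [hx j hj, mul_zero]) fun _ => rfl

lemma comp_mem_stdSimplex (hf : f.Injective) (hx : ∀ j ∉ Set.range f, x j = 0)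
    (hxS : x ∈ stdSimplex ℝ (Fin n)) : x ∘ f ∈ stdSimplex ℝ (Fin s) :=
  ⟨fun k => hxS.1 (f k), by
    simpa using (sum_comp_mul_comp_eq_sum hf hx 1).trans (by simpa using hxS.2)⟩

lemma gameValue_submatrix_le_iSup {m : ℕ} [Nonempty (Fin m)] (A : Matrix (Fin m) (Fin n) ℝ)
    (hf : f.Injective) (hx : ∀ j ∉ Set.range f, x j = 0) (hxS : x ∈ stdSimplex ℝ (Fin n)) :
    gameValue m s (A.submatrix id f) ≤ ⨆ i, ∑ j, A i j * x j := by
  simpa [sum_comp_mul_comp_eq_sum hf hx] using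
    gameValue_le_iSup_of_mem_stdSimplex (A.submatrix id f) (comp_mem_stdSimplex hf hx hxS)

end Restriction

theorem stmt10_general (m n s : ℕ) (hm : 0 < m) (hsn : s ≤ n)
    (A : Matrix (Fin m) (Fin n) ℝ) (ε : ℝ)
    (hsub : ∀ f : Fin s → Fin n, Function.Injective f →
      gameValue m s (A.submatrix id f) > (1 + ε) * gameValue m n A)
    (S : Finset (Fin n)) (hS : S.card ≤ s) :
    ¬ ∃ x ∈ stdSimplex ℝ (Fin n), (∀ j ∉ S, x j = 0) ∧
        ∀ i : Fin m, ∑ j, A i j * x j ≤ (1 + ε) * gameValue m n A := by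
  rintro ⟨x, hx, hxS, hAx⟩
  have : Nonempty (Fin m) := Fin.pos_iff_nonempty.mp hm
  obtain ⟨f, hSf⟩ := exists_embedding_fin_range_superset hS hsn
  have hxf : ∀ j ∉ Set.range f, x j = 0 := fun j hj => hxS j fun hjS => hj (hSf hjS)
  have hle := (gameValue_submatrix_le_iSup A f.injective hxf hx).trans (ciSup_le hAx)
  exact (hsub f f.injective).not_ge hle

/-- A Dantzig-Wolfe-type algorithm over the simplex making at most `s` oracle
queries receives `s` standard basis vectors; any point in their convex hull is
supported on a set `S` of at most `s` coordinates.  If every `m × s` column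
submatrix `B` of `A` has `V(B) > (1+ε)V(A)`, then no point of the simplex
supported on `S` can satisfy `Ax ≤ (1+ε)b` where `b` is the all-`V(A)` vector. -/
theorem stmt10 (m n s : ℕ) (hm : 0 < m) (hs : 0 < s) (hsn : s ≤ n)
    (A : Matrix (Fin m) (Fin n) ℝ) (ε : ℝ) (hε : 0 < ε)
    (hsub : ∀ f : Fin s → Fin n, Function.Injective f →
      gameValue m s (A.submatrix id f) > (1 + ε) * gameValue m n A)
    (S : Finset (Fin n)) (hS : S.card ≤ s) :
    ¬ ∃ x ∈ stdSimplex ℝ (Fin n), (∀ j ∉ S, x j = 0) ∧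
        ∀ i : Fin m, ∑ j, A i j * x j ≤ (1 + ε) * gameValue m n A :=
  stmt10_general m n s hm hsn A ε hsub S hS
end
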